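/- Let λ ≥ 1, μ > 0.462, α, β ∈ [0,1). If (1-αβ) μ^{-1} e^{1/μ} ≤ 1-α, then Σ_{n≥2} n(n-α-(n-1)αβ) · [Γ(μ)/Γ(λ(n-1)+μ)] · e^{-1/μ}/n! ≤ 1-α, i.e., the function Ĝ_{λ,μ}(z) = z - Σ_{n≥2} [Γ(μ)/Γ(λ(n-1)+μ)] e^{-1/μ}/n! · z^n belongs to TC(α,β). -/

import Mathlib

/-!
Since `1 - α ≤ 1 - αβ`, the hypothesis forces `exp (1/μ) ≤ μ`, hence `μ > 1`. Then
`Γ(λ(n-1)+μ) ≥ Γ(μ+n-1) ≥ μ^(n-1) Γ(μ)` by monotonicity of `Γ` on `[2, ∞)` and `Γ(x+1) = x Γ(x)`.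
The coefficient `n(n-α-(n-1)αβ)/n!` splits as `(1-αβ)/(n-2)! + (1-α)/(n-1)!`, so with
`x = 1/μ` the series is dominated by `e^{-x} Σ ((1-αβ)/(n-2)! + (1-α)/(n-1)!) x^(n-1)`, which sums
to `(1-αβ) x + (1-α)(1 - e^{-x})`; this is at most `1-α` exactly when `(1-αβ) x e^x ≤ 1-α`.
-/

open Real
open scoped Nat

namespace Real

theorem one_lt_of_inv_mul_exp_inv_le_one {μ : ℝ} (hμ : 0 < μ) (h : μ⁻¹ * exp μ⁻¹ ≤ 1) :
    1 < μ := by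
  have hlt : μ⁻¹ < μ⁻¹ * exp μ⁻¹ :=
    lt_mul_of_one_lt_right (inv_pos.2 hμ) (one_lt_exp_iff.2 (inv_pos.2 hμ))
  exact (inv_lt_one₀ hμ).1 (hlt.trans_le h)

theorem pow_mul_Gamma_le_Gamma_add_nat {x : ℝ} (hx : 0 < x) (m : ℕ) :
    x ^ m * Gamma x ≤ Gamma (x + m) := by
  induction m with
  | zero => simp
  | succ m ih =>
    have hxm : 0 < x + m := by positivity
    rw [Nat.cast_succ, ← add_assoc, Gamma_add_one hxm.ne', pow_succ']
    calc x * x ^ m * Gamma x = x * (x ^ m * Gamma x) := by ring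
      _ ≤ (x + m) * Gamma (x + m) := by
        gcongr
        linarith [m.cast_nonneg (α := ℝ)]

theorem Gamma_div_Gamma_mul_add_le {lam μ : ℝ} (hlam : 1 ≤ lam) (hμ : 1 < μ) (n : ℕ) :
    Gamma μ / Gamma (lam * ((n : ℝ) + 1) + μ) ≤ μ⁻¹ ^ (n + 1) := by
  have hn : (0 : ℝ) ≤ n := n.cast_nonneg
  have hmono : Gamma (μ + ((n + 1 : ℕ) : ℝ)) ≤ Gamma (lam * ((n : ℝ) + 1) + μ) := by
    refine Gamma_strictMonoOn_Ici.monotoneOn (Set.mem_Ici.2 ?_) (Set.mem_Ici.2 ?_) ?_ <;>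
      push_cast <;> nlinarith
  rw [div_le_iff₀ (Gamma_pos_of_pos (by nlinarith)), inv_pow,
    inv_mul_eq_div, le_div_iff₀ (by positivity), mul_comm]
  exact (pow_mul_Gamma_le_Gamma_add_nat (by linarith) (n + 1)).trans hmono

theorem hasSum_pow_succ_div_factorial (x : ℝ) :
    HasSum (fun n : ℕ => x ^ (n + 1) / (n ! : ℝ)) (x * exp x) := by
  have h := (NormedSpace.expSeries_div_hasSum_exp x).mul_left x
  rw [← exp_eq_exp_ℝ] at h
  exact h.congr_fun fun n => by ring

theorem hasSum_pow_succ_div_factorial_succ (x : ℝ) :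
    HasSum (fun n : ℕ => x ^ (n + 1) / ((n + 1)! : ℝ)) (exp x - 1) := by
  have h := NormedSpace.expSeries_div_hasSum_exp x
  rw [← exp_eq_exp_ℝ, ← hasSum_nat_add_iff' 1] at h
  simpa using h

end Real

theorem add_two_mul_sub_div_factorial (a b : ℝ) (n : ℕ) :
    ((n : ℝ) + 2) * ((n + 2) - a - (n + 1) * b) / ((n + 2)! : ℝ)
      = (1 - b) / (n ! : ℝ) + (1 - a) / ((n + 1)! : ℝ) := by
  rw [Nat.factorial_succ, Nat.factorial_succ]
  push_cast
  field_simp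
  ring

theorem hasSum_coeff_mul_pow_succ_mul_exp_neg (a b x : ℝ) :
    HasSum (fun n : ℕ => ((1 - b) / (n ! : ℝ) + (1 - a) / ((n + 1)! : ℝ)) * x ^ (n + 1) * exp (-x))
      ((1 - b) * x + (1 - a) * (1 - exp (-x))) := by
  have h := (((hasSum_pow_succ_div_factorial x).mul_left (1 - b)).add
    ((hasSum_pow_succ_div_factorial_succ x).mul_left (1 - a))).mul_right (exp (-x))
  have hsum : ((1 - b) * (x * exp x) + (1 - a) * (exp x - 1)) * exp (-x)
      = (1 - b) * x + (1 - a) * (1 - exp (-x)) := by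
    rw [exp_neg]
    field_simp
  rw [hsum] at h
  exact h.congr_fun fun n => by ring

theorem summable_and_tsum_le_of_le_pow_succ {a b x : ℝ} {r : ℕ → ℝ} (ha : a ≤ 1) (hb : b ≤ 1)
    (hr0 : ∀ n, 0 ≤ r n) (hr : ∀ n, r n ≤ x ^ (n + 1)) :
    Summable (fun n : ℕ => ((1 - b) / (n ! : ℝ) + (1 - a) / ((n + 1)! : ℝ)) * r n * exp (-x)) ∧
    ∑' n : ℕ, ((1 - b) / (n ! : ℝ) + (1 - a) / ((n + 1)! : ℝ)) * r n * exp (-x)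
      ≤ (1 - b) * x + (1 - a) * (1 - exp (-x)) := by
  have hc : ∀ n : ℕ, 0 ≤ (1 - b) / (n ! : ℝ) + (1 - a) / ((n + 1)! : ℝ) := fun n =>
    add_nonneg (div_nonneg (by linarith) (by positivity)) (div_nonneg (by linarith) (by positivity))
  have hle : ∀ n : ℕ, ((1 - b) / (n ! : ℝ) + (1 - a) / ((n + 1)! : ℝ)) * r n * exp (-x)
      ≤ ((1 - b) / (n ! : ℝ) + (1 - a) / ((n + 1)! : ℝ)) * x ^ (n + 1) * exp (-x) := fun n =>
    mul_le_mul_of_nonneg_right (mul_le_mul_of_nonneg_left (hr n) (hc n)) (exp_pos _).le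
  have hmaj := hasSum_coeff_mul_pow_succ_mul_exp_neg a b x
  have hsum := hmaj.summable.of_nonneg_of_le
    (fun n => mul_nonneg (mul_nonneg (hc n) (hr0 n)) (exp_pos _).le) hle
  exact ⟨hsum, hasSum_le hle hsum.hasSum hmaj⟩

theorem mul_add_mul_one_sub_exp_neg_le {a b x : ℝ} (h : (1 - b) * (x * exp x) ≤ 1 - a) :
    (1 - b) * x + (1 - a) * (1 - exp (-x)) ≤ 1 - a := by
  have hx : (1 - b) * x ≤ (1 - a) * exp (-x) :=
    calc (1 - b) * x = (1 - b) * (x * exp x) * exp (-x) := by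
          rw [mul_assoc, mul_assoc, ← exp_add, add_neg_cancel, exp_zero, mul_one]
      _ ≤ (1 - a) * exp (-x) := by gcongr
  linarith

theorem stmt18_general (lam μ α β : ℝ) (hlam : 1 ≤ lam) (hμ : 0.462 < μ)
    (hα0 : 0 ≤ α) (hα1 : α < 1) (hβ1 : β < 1)
    (hcond : (1 - α * β) / μ * Real.exp (1 / μ) ≤ 1 - α) :
    Summable (fun n : ℕ =>
      ((n : ℝ) + 2) * (((n : ℝ) + 2) - α - ((n : ℝ) + 1) * α * β) *
        (Real.Gamma μ / Real.Gamma (lam * ((n : ℝ) + 1) + μ)) * Real.exp (-1 / μ) /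
        (Nat.factorial (n + 2) : ℝ)) ∧
    ∑' n : ℕ,
      ((n : ℝ) + 2) * (((n : ℝ) + 2) - α - ((n : ℝ) + 1) * α * β) *
        (Real.Gamma μ / Real.Gamma (lam * ((n : ℝ) + 1) + μ)) * Real.exp (-1 / μ) /
        (Nat.factorial (n + 2) : ℝ) ≤ 1 - α := by
  have hμ0 : 0 < μ := by linarith
  have hβα : 1 - α ≤ 1 - α * β := by nlinarith
  have hcond' : (1 - α * β) * (μ⁻¹ * exp μ⁻¹) ≤ 1 - α := by
    simpa only [one_div, div_eq_mul_inv, mul_assoc, one_mul] using hcond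
  have hμ1 : 1 < μ := one_lt_of_inv_mul_exp_inv_le_one hμ0
    (le_of_mul_le_mul_left ((hcond'.trans hβα).trans_eq (mul_one _).symm) (by linarith))
  have hterm : ∀ n : ℕ,
      ((n : ℝ) + 2) * (((n : ℝ) + 2) - α - ((n : ℝ) + 1) * α * β) *
        (Gamma μ / Gamma (lam * ((n : ℝ) + 1) + μ)) * exp (-1 / μ) / ((n + 2)! : ℝ)
      = ((1 - α * β) / (n ! : ℝ) + (1 - α) / ((n + 1)! : ℝ)) *
        (Gamma μ / Gamma (lam * ((n : ℝ) + 1) + μ)) * exp (-μ⁻¹) := fun n => by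
    rw [← add_two_mul_sub_div_factorial, neg_div, one_div]
    ring
  have hratio_nonneg : ∀ n : ℕ, 0 ≤ Gamma μ / Gamma (lam * ((n : ℝ) + 1) + μ) := fun n =>
    div_nonneg (Gamma_pos_of_pos hμ0).le (Gamma_pos_of_pos (by positivity)).le
  obtain ⟨hsum, hle⟩ := summable_and_tsum_le_of_le_pow_succ (b := α * β) (x := μ⁻¹) hα1.le
    (by linarith) hratio_nonneg (Gamma_div_Gamma_mul_add_le hlam hμ1)
  simp only [hterm]
  exact ⟨hsum, hle.trans (mul_add_mul_one_sub_exp_neg_le hcond')⟩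

theorem stmt18 (lam μ α β : ℝ) (hlam : 1 ≤ lam) (hμ : 0.462 < μ)
    (hα0 : 0 ≤ α) (hα1 : α < 1) (hβ0 : 0 ≤ β) (hβ1 : β < 1)
    (hcond : (1 - α * β) / μ * Real.exp (1 / μ) ≤ 1 - α) :
    Summable (fun n : ℕ =>
      ((n : ℝ) + 2) * (((n : ℝ) + 2) - α - ((n : ℝ) + 1) * α * β) *
        (Real.Gamma μ / Real.Gamma (lam * ((n : ℝ) + 1) + μ)) * Real.exp (-1 / μ) /
        (Nat.factorial (n + 2) : ℝ)) ∧
    ∑' n : ℕ,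
      ((n : ℝ) + 2) * (((n : ℝ) + 2) - α - ((n : ℝ) + 1) * α * β) *
        (Real.Gamma μ / Real.Gamma (lam * ((n : ℝ) + 1) + μ)) * Real.exp (-1 / μ) /
        (Nat.factorial (n + 2) : ℝ) ≤ 1 - α :=
  stmt18_general lam μ α β hlam hμ hα0 hα1 hβ1 hcond
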